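/- arXiv:1408.6395 — 4 statements merged into one kernel-verified Lean document; each statement's English description precedes it below -/
import Mathlib

section
/- Bounded Possible Answers: Let Q = (W, P) be a positive query with BGP P, and C a set of completeness statements. If C entails the positive crucial statement C⁺_Q = Compl(P | true), then for all graphs G, the possible answers, certain answers, and query result coincide: poss(Q, G, C) = cert(Q, G, C) = ⟦Q⟧_G. -/
/-!
Completeness of `P` forces every valid extension `G'` of `G` to contain no new instantiation
of `P`: an instantiation `μ(P) ⊆ G'` already lies in `G`. Conversely every instantiation in `G`
survives in `G' ⊇ G`. Hence `⟦Q⟧_{G'} = ⟦Q⟧_G` on all of `ext(G, C)`, and since `G` itself is a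
valid extension, the union and the intersection over `ext(G, C)` both equal `⟦Q⟧_G`.
-/

namespace RDF

/-- Terms are variables or constants. -/
abbrev Term (V T : Type) := V ⊕ T
abbrev Triple (V T : Type) := Term V T × Term V T × Term V T
/-- A graph / basic graph pattern is a set of triples (patterns). -/
abbrev Graph (V T : Type) := Set (Triple V T)
abbrev BGP (V T : Type) := Set (Triple V T)
/-- A (partial) mapping from variables to terms. -/
abbrev Mapping (V T : Type) := V → Option T

variable {V T : Type}

def applyTerm (μ : Mapping V T) : Term V T → Term V T
  | .inl v => (μ v).elim (.inl v) .inr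
  | .inr t => .inr t

def applyTriple (μ : Mapping V T) (x : Triple V T) : Triple V T :=
  (applyTerm μ x.1, applyTerm μ x.2.1, applyTerm μ x.2.2)

/-- Instantiation μ(P) of a BGP. -/
def applyBGP (μ : Mapping V T) (P : BGP V T) : BGP V T :=
  applyTriple μ '' P

def dom (μ : Mapping V T) : Set V := {v | μ v ≠ none}

def varsTriple (x : Triple V T) : Set V :=
  {v | x.1 = .inl v ∨ x.2.1 = .inl v ∨ x.2.2 = .inl v}

def vars (P : BGP V T) : Set V := ⋃ x ∈ P, varsTriple x

/-- ⟦P⟧_G = {μ | dom(μ) = var(P), μ(P) ⊆ G}. -/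
def evalBGP (P : BGP V T) (G : Graph V T) : Set (Mapping V T) :=
  {μ | dom μ = vars P ∧ applyBGP μ P ⊆ G}

open Classical in
/-- Restriction μ|_W of a mapping to a set of variables. -/
noncomputable def restrictMap (W : Set V) (μ : Mapping V T) : Mapping V T :=
  fun v => if v ∈ W then μ v else none

/-- Evaluation of a positive query (W, P) with BGP P. -/
def evalPos (W : Set V) (P : BGP V T) (G : Graph V T) : Set (Mapping V T) :=
  restrictMap W '' evalBGP P G

/-- A completeness statement Compl(pat | cond). -/
structure ComplStmt (V T : Type) where
  pat : BGP V T
  cond : BGP V T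

/-- (G,G') ⊨ Compl(P1 | P2)  iff  ⋃{μ(P1) | μ(P1 ∪ P2) ⊆ G'} ⊆ G. -/
def sat (c : ComplStmt V T) (G G' : Graph V T) : Prop :=
  ∀ μ : Mapping V T, applyBGP μ (c.pat ∪ c.cond) ⊆ G' → applyBGP μ c.pat ⊆ G

def satSet (C : Set (ComplStmt V T)) (G G' : Graph V T) : Prop :=
  ∀ c ∈ C, sat c G G'

/-- Valid interpretations ext(G, C). -/
def ext (G : Graph V T) (C : Set (ComplStmt V T)) : Set (Graph V T) :=
  {G' | G ⊆ G' ∧ satSet C G G'}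

/-- Entailment C ⊨ c of a single completeness statement. -/
def entails (C : Set (ComplStmt V T)) (c : ComplStmt V T) : Prop :=
  ∀ G G' : Graph V T, G ⊆ G' → satSet C G G' → sat c G G'

/-- Entailment C ⊨ D of a set of completeness statements. -/
def entailsSet (C D : Set (ComplStmt V T)) : Prop :=
  ∀ G G' : Graph V T, G ⊆ G' → satSet C G G' → satSet D G G'

/-- Evaluation of the pattern P⁺ AND ¬P₁ AND … AND ¬Pₙ over G. -/
def evalPattern (Pplus : BGP V T) (Ps : List (BGP V T)) (G : Graph V T) :
    Set (Mapping V T) :=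
  {μ | μ ∈ evalBGP Pplus G ∧ ∀ Pi ∈ Ps, evalBGP (applyBGP μ Pi) G = ∅}

/-- Evaluation of a query with negation (W, P⁺ AND ¬P₁ … ¬Pₙ). -/
def evalQuery (W : Set V) (Pplus : BGP V T) (Ps : List (BGP V T)) (G : Graph V T) :
    Set (Mapping V T) :=
  restrictMap W '' evalPattern Pplus Ps G

/-- Certain answers w.r.t. completeness statements. -/
def cert {A : Type} (Q : Graph V T → Set A) (G : Graph V T)
    (C : Set (ComplStmt V T)) : Set A :=
  ⋂ G' ∈ ext G C, Q G'

/-- Possible answers w.r.t. completeness statements. -/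
def poss {A : Type} (Q : Graph V T → Set A) (G : Graph V T)
    (C : Set (ComplStmt V T)) : Set A :=
  ⋃ G' ∈ ext G C, Q G'

theorem self_mem_ext (G : Graph V T) (C : Set (ComplStmt V T)) : G ∈ ext G C :=
  ⟨subset_rfl, fun _ _ _ hμ => (Set.image_mono Set.subset_union_left).trans hμ⟩

theorem evalBGP_mono (P : BGP V T) {G G' : Graph V T} (hG : G ⊆ G') :
    evalBGP P G ⊆ evalBGP P G' :=
  fun _ ⟨hdom, happ⟩ => ⟨hdom, happ.trans hG⟩

theorem evalBGP_subset_of_sat {P : BGP V T} {G G' : Graph V T} (hP : sat ⟨P, ∅⟩ G G') :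
    evalBGP P G' ⊆ evalBGP P G := by
  rintro μ ⟨hdom, happ⟩
  exact ⟨hdom, hP μ (by rwa [Set.union_empty])⟩

theorem evalPos_eq_of_mem_ext (W : Set V) {P : BGP V T} {C : Set (ComplStmt V T)}
    (h : entails C ⟨P, ∅⟩) {G G' : Graph V T} (hG' : G' ∈ ext G C) :
    evalPos W P G' = evalPos W P G :=
  congrArg (restrictMap W '' ·) <|
    (evalBGP_subset_of_sat (h G G' hG'.1 hG'.2)).antisymm (evalBGP_mono P hG'.1)

section ConstantOnExt

variable {A : Type} {Q : Graph V T → Set A} {G : Graph V T} {C : Set (ComplStmt V T)}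

theorem poss_eq_of_forall_mem_ext (hQ : ∀ G' ∈ ext G C, Q G' = Q G) : poss Q G C = Q G := by
  refine subset_antisymm ?_ (Set.subset_biUnion_of_mem (u := Q) (self_mem_ext G C))
  exact Set.iUnion₂_subset fun G' hG' => (hQ G' hG').le

theorem cert_eq_of_forall_mem_ext (hQ : ∀ G' ∈ ext G C, Q G' = Q G) : cert Q G C = Q G := by
  refine subset_antisymm (Set.biInter_subset_of_mem (t := Q) (self_mem_ext G C)) ?_
  exact Set.subset_iInter₂ fun G' hG' => (hQ G' hG').ge

end ConstantOnExt

theorem bounded_possible_answers_general {V T : Type} (W : Set V) (P : BGP V T)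
    (C : Set (ComplStmt V T))
    (h : entails C ⟨P, (∅ : BGP V T)⟩) :
    ∀ G : Graph V T,
      poss (evalPos W P) G C = cert (evalPos W P) G C ∧
      cert (evalPos W P) G C = evalPos W P G := by
  intro G
  have hconst : ∀ G' ∈ ext G C, evalPos W P G' = evalPos W P G :=
    fun _ hG' => evalPos_eq_of_mem_ext W h hG'
  rw [poss_eq_of_forall_mem_ext hconst, cert_eq_of_forall_mem_ext hconst]
  exact ⟨rfl, rfl⟩

/-- Bounded Possible Answers: if C ⊨ Compl(P | true) then
    poss = cert = ⟦Q⟧_G for the positive query Q = (W, P). -/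
theorem bounded_possible_answers {V T : Type} (W : Set V) (P : BGP V T)
    (hW : W ⊆ vars P) (C : Set (ComplStmt V T))
    (h : entails C ⟨P, (∅ : BGP V T)⟩) :
    ∀ G : Graph V T,
      poss (evalPos W P) G C = cert (evalPos W P) G C ∧
      cert (evalPos W P) G C = evalPos W P G :=
  bounded_possible_answers_general W P C h

end RDF
end

section
/- Exact answers for queries with negation: Let Q = (W, P⁺ AND ¬P₁ AND … AND ¬Pₙ) and C a set of completeness statements. If C entails both the positive crucial statement Compl(P⁺ | true) and all negative crucial statements Compl(Pᵢ | P⁺), then for all graphs G, poss(Q, G, C) = cert(Q, G, C) = ⟦Q⟧_G. -/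
namespace RDF

variable {V T : Type}

/-- Composition of mappings: use μ first, fall back to ν. -/
def compMap (μ ν : Mapping V T) : Mapping V T := fun v => (μ v).elim (ν v) some

lemma applyTerm_comp (μ ν : Mapping V T) (t : Term V T) :
    applyTerm (compMap μ ν) t = applyTerm ν (applyTerm μ t) := by
  cases t with
  | inl v => cases h : μ v <;> simp [applyTerm, compMap, h]
  | inr t => simp [applyTerm]

lemma applyTriple_comp (μ ν : Mapping V T) (x : Triple V T) :
    applyTriple (compMap μ ν) x = applyTriple ν (applyTriple μ x) := by
  simp [applyTriple, applyTerm_comp]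

lemma applyBGP_comp (μ ν : Mapping V T) (P : BGP V T) :
    applyBGP (compMap μ ν) P = applyBGP ν (applyBGP μ P) := by
  simp [applyBGP, Set.image_image, applyTriple_comp]

lemma applyTriple_ground (μ ν : Mapping V T) (x : Triple V T)
    (h : varsTriple x ⊆ dom μ) :
    applyTriple ν (applyTriple μ x) = applyTriple μ x := by
  obtain ⟨a, b, c⟩ := x
  have hterm : ∀ t : Term V T, (∀ v, t = .inl v → v ∈ dom μ) →
      applyTerm ν (applyTerm μ t) = applyTerm μ t := by
    intro t ht
    cases t with
    | inl v =>
      have hv := ht v rfl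
      simp only [dom, Set.mem_setOf_eq] at hv
      cases h' : μ v with
      | none => exact absurd h' hv
      | some u => simp [applyTerm, h']
    | inr u => simp [applyTerm]
  simp only [applyTriple]
  refine Prod.ext ?_ (Prod.ext ?_ ?_)
  · exact hterm a (fun v hv => h (Or.inl hv))
  · exact hterm b (fun v hv => h (Or.inr (Or.inl hv)))
  · exact hterm c (fun v hv => h (Or.inr (Or.inr hv)))

lemma applyBGP_ground (μ ν : Mapping V T) (P : BGP V T) (h : vars P ⊆ dom μ) :
    applyBGP ν (applyBGP μ P) = applyBGP μ P := by
  unfold applyBGP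
  rw [Set.image_image]
  apply Set.image_congr
  intro x hx
  exact applyTriple_ground μ ν x (fun v hv => h (Set.mem_biUnion hx hv))

lemma evalPattern_eq_of_ext {W : Set V}
    (Pplus : BGP V T) (Ps : List (BGP V T))
    (C : Set (ComplStmt V T))
    (hpos : entails C ⟨Pplus, (∅ : BGP V T)⟩)
    (hneg : ∀ Pi ∈ Ps, entails C ⟨Pi, Pplus⟩)
    (G G' : Graph V T) (hGG' : G ⊆ G') (hsat : satSet C G G') :
    evalPattern Pplus Ps G' = evalPattern Pplus Ps G := by
  have hposbgp : evalBGP Pplus G' = evalBGP Pplus G := by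
    ext μ
    constructor
    · rintro ⟨h1, h2⟩
      refine ⟨h1, ?_⟩
      have := hpos G G' hGG' hsat μ
      simp only [Set.union_empty] at this
      exact this h2
    · rintro ⟨h1, h2⟩
      exact ⟨h1, h2.trans hGG'⟩
  ext μ
  simp only [evalPattern, Set.mem_setOf_eq, hposbgp]
  constructor
  · rintro ⟨h1, h2⟩
    refine ⟨h1, fun Pi hPi => ?_⟩
    rw [Set.eq_empty_iff_forall_notMem]
    rintro ν ⟨hd, hsub⟩
    have hν' : ν ∈ evalBGP (applyBGP μ Pi) G' := ⟨hd, hsub.trans hGG'⟩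
    exact Set.eq_empty_iff_forall_notMem.mp (h2 Pi hPi) ν hν'
  · rintro ⟨h1, h2⟩
    refine ⟨h1, fun Pi hPi => ?_⟩
    rw [Set.eq_empty_iff_forall_notMem]
    rintro ν ⟨hd, hsub⟩
    -- Use the crucial negative statement with the composed mapping.
    have hdomμ : dom μ = vars Pplus := h1.1
    have hgr : applyBGP ν (applyBGP μ Pplus) = applyBGP μ Pplus :=
      applyBGP_ground μ ν Pplus (by rw [hdomμ])
    have hcond : applyBGP (compMap μ ν) (Pi ∪ Pplus) ⊆ G' := by
      rw [applyBGP_comp]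
      simp only [applyBGP, Set.image_union] at *
      apply Set.union_subset
      · exact hsub
      · rw [show applyTriple ν '' (applyTriple μ '' Pplus) = applyTriple μ '' Pplus
            from hgr]
        exact h1.2.trans hGG'
    have hPiG : applyBGP (compMap μ ν) Pi ⊆ G :=
      hneg Pi hPi G G' hGG' hsat (compMap μ ν) hcond
    rw [applyBGP_comp] at hPiG
    exact Set.eq_empty_iff_forall_notMem.mp (h2 Pi hPi) ν ⟨hd, hPiG⟩

/-- exact answers for queries with negation:
    if C entails Compl(P⁺ | true) and all Compl(Pᵢ | P⁺),
    then poss = cert = ⟦Q⟧_G. -/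
theorem exact_answers_with_negation {V T : Type} (W : Set V)
    (Pplus : BGP V T) (Ps : List (BGP V T)) (hW : W ⊆ vars Pplus)
    (C : Set (ComplStmt V T))
    (hpos : entails C ⟨Pplus, (∅ : BGP V T)⟩)
    (hneg : ∀ Pi ∈ Ps, entails C ⟨Pi, Pplus⟩) :
    ∀ G : Graph V T,
      poss (evalQuery W Pplus Ps) G C = cert (evalQuery W Pplus Ps) G C ∧
      cert (evalQuery W Pplus Ps) G C = evalQuery W Pplus Ps G := by
  intro G
  have hGext : G ∈ ext G C := by
    refine ⟨subset_rfl, fun c hc μ h => ?_⟩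
    refine subset_trans ?_ h
    simp only [applyBGP, Set.image_union]
    exact Set.subset_union_left
  have hEq : ∀ G' ∈ ext G C, evalQuery W Pplus Ps G' = evalQuery W Pplus Ps G := by
    rintro G' ⟨hGG', hsat⟩
    unfold evalQuery
    rw [evalPattern_eq_of_ext (W := W) Pplus Ps C hpos hneg G G' hGG' hsat]
  have hcert : cert (evalQuery W Pplus Ps) G C = evalQuery W Pplus Ps G := by
    apply subset_antisymm
    · intro a ha
      exact Set.mem_iInter₂.mp ha G hGext
    · intro a ha
      exact Set.mem_iInter₂.mpr (fun G' hG' => (hEq G' hG') ▸ ha)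
  have hposs : poss (evalQuery W Pplus Ps) G C = evalQuery W Pplus Ps G := by
    apply subset_antisymm
    · intro a ha
      obtain ⟨G', hG', haG'⟩ := Set.mem_iUnion₂.mp ha
      exact (hEq G' hG') ▸ haG'
    · intro a ha
      exact Set.mem_biUnion hGext ha
  exact ⟨hposs.trans hcert.symm, hcert⟩

end RDF
end

section
/- If a mapping μ' satisfies μ' ∈ ⟦P⁺⟧_G and ⟦μ'(Pᵢ)⟧_G = ∅, and (G, G') satisfies the completeness statement Compl(Pᵢ | P⁺) with G ⊆ G', then ⟦μ'(Pᵢ)⟧_{G'} = ∅ (the negative condition is preserved in valid interpretations). -/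
namespace RDF

variable {V T : Type}

/-- the negative condition is preserved in valid interpretations. -/
theorem negative_condition_preserved {V T : Type} (Pplus Pi : BGP V T)
    (G G' : Graph V T) (μ' : Mapping V T)
    (hμ : μ' ∈ evalBGP Pplus G)
    (hempty : evalBGP (applyBGP μ' Pi) G = ∅)
    (hsat : sat ⟨Pi, Pplus⟩ G G') (hsub : G ⊆ G') :
    evalBGP (applyBGP μ' Pi) G' = ∅ := by
  by_contra h
  obtain ⟨ν, hdom, hsubν⟩ := Set.nonempty_iff_ne_empty.mpr h
  obtain ⟨hμdom, hμsub⟩ := hμ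
  set μ : Mapping V T := fun v => match μ' v with | some t => some t | none => ν v with hμdef
  have hterm : ∀ t : Term V T, applyTerm μ t = applyTerm ν (applyTerm μ' t) := by
    rintro (v | t)
    · cases hv : μ' v <;> simp [applyTerm, hμdef, hv]
    · rfl
  have hcomp : ∀ x : Triple V T, applyTriple μ x = applyTriple ν (applyTriple μ' x) := by
    intro x; simp [applyTriple, hterm]
  have hcompBGP : applyBGP μ Pi = applyBGP ν (applyBGP μ' Pi) := by
    simp only [applyBGP, Set.image_image]
    exact Set.image_congr fun x _ => hcomp x
  have hground : ∀ t : Term V T, (∀ v, t = .inl v → v ∈ dom μ') →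
      applyTerm ν (applyTerm μ' t) = applyTerm μ' t := by
    rintro (v | t) hv
    · have := hv v rfl
      simp only [dom, Set.mem_setOf_eq] at this
      cases hc : μ' v with
      | none => exact absurd hc this
      | some u => simp [applyTerm, hc]
    · rfl
  have key : applyBGP μ (Pi ∪ Pplus) ⊆ G' := by
    rintro _ ⟨x, hx | hx, rfl⟩
    · rw [hcomp]
      exact hsubν ⟨applyTriple μ' x, ⟨x, hx, rfl⟩, rfl⟩
    · rw [hcomp]
      have hx' : applyTriple μ' x ∈ G := hμsub ⟨x, hx, rfl⟩
      have hv : ∀ u : Term V T, (u = x.1 ∨ u = x.2.1 ∨ u = x.2.2) →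
          ∀ v, u = .inl v → v ∈ dom μ' := by
        intro u hu v huv
        rw [hμdom]
        refine Set.mem_biUnion hx ?_
        rcases hu with rfl | rfl | rfl <;>
          simp [varsTriple, ← huv]
      have : applyTriple ν (applyTriple μ' x) = applyTriple μ' x := by
        simp only [applyTriple]
        rw [hground x.1 (hv x.1 (Or.inl rfl)), hground x.2.1 (hv x.2.1 (Or.inr (Or.inl rfl))),
          hground x.2.2 (hv x.2.2 (Or.inr (Or.inr rfl)))]
      rw [this]
      exact hsub hx'
  have hin : applyBGP ν (applyBGP μ' Pi) ⊆ G := by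
    rw [← hcompBGP]
    exact hsat μ key
  have : ν ∈ evalBGP (applyBGP μ' Pi) G := ⟨hdom, hin⟩
  rw [hempty] at this
  exact this

end RDF
end

section
/- If C entails the positive crucial statement C⁺_Q = Compl(P⁺ | true) of a query Q = (W, P⁺ AND ¬P₁ … ¬Pₙ), then for every graph G and every valid interpretation G' ∈ ext(G, C), ⟦P⁺⟧_{G'} = ⟦P⁺⟧_G. -/
namespace RDF

variable {V T : Type}

/-- if C ⊨ Compl(P⁺ | true), then in every valid interpretation
    G' ∈ ext(G, C) the positive part evaluates as over G. -/
theorem positive_part_exact {V T : Type} (Pplus : BGP V T)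
    (C : Set (ComplStmt V T))
    (h : entails C ⟨Pplus, (∅ : BGP V T)⟩) :
    ∀ (G : Graph V T), ∀ G' ∈ ext G C,
      evalBGP Pplus G' = evalBGP Pplus G := by
  intro G G' hG'
  obtain ⟨hsub, hsat⟩ := hG'
  have hs := h G G' hsub hsat
  ext μ
  constructor
  · rintro ⟨hd, hb⟩
    refine ⟨hd, ?_⟩
    have : applyBGP μ (Pplus ∪ (∅ : BGP V T)) ⊆ G' := by
      simpa [Set.union_empty] using hb
    simpa using hs μ this
  · rintro ⟨hd, hb⟩
    exact ⟨hd, hb.trans hsub⟩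

end RDF
end
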